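/- arXiv:2403.04324 — 3 statements merged into one kernel-verified Lean document; each statement's English description precedes it below -/
import Mathlib

section
/- If the sublinear expectation E[·] = sup_{P∈P} E_P[·] over a family P of probability measures is regular (i.e., for every uniformly bounded sequence X_m ↓ 0 pointwise one has E[X_m] ↓ 0), and Ω is a countable discrete space, then P is uniformly tight: for every ε > 0 there is a finite set K ⊆ Ω with sup_{P∈P} P(Ω ∖ K) < ε. -/
/-!
Regularity applied to the indicators of the tails `{ω | m ≤ ω}`, which decrease pointwise to `0`,
shows that the tail probabilities tend to `0` uniformly over the family; a finite initial segment
`{0, …, m - 1}` then carries all but `ε` of the mass of every measure.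
-/

open MeasureTheory Filter Set

lemma iSup_measure_le_ofReal_sSup_measureReal {α : Type*} [MeasurableSpace α]
    {Ps : Set (Measure α)} (hprob : ∀ P ∈ Ps, IsProbabilityMeasure P) (s : Set α) :
    ⨆ P ∈ Ps, P s ≤ ENNReal.ofReal (sSup ((fun P => P.real s) '' Ps)) := by
  have hbdd : BddAbove ((fun P => P.real s) '' Ps) := by
    refine ⟨1, ?_⟩
    rintro _ ⟨P, hP, rfl⟩
    have := hprob P hP
    exact measureReal_le_one
  refine iSup₂_le fun P hP => ?_
  have := hprob P hP
  rw [← ofReal_measureReal]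
  exact ENNReal.ofReal_le_ofReal (le_csSup hbdd ⟨P, hP, rfl⟩)

lemma tendsto_sSup_measureReal_Ici_of_regular (Ps : Set (Measure ℕ))
    (hreg : ∀ (X : ℕ → ℕ → ℝ) (C : ℝ),
      (∀ m ω, 0 ≤ X m ω) → (∀ m ω, X m ω ≤ C) →
      (∀ ω, Antitone fun m => X m ω) →
      (∀ ω, Tendsto (fun m => X m ω) atTop (nhds 0)) →
      Tendsto (fun m => sSup ((fun P => ∫ ω, X m ω ∂P) '' Ps)) atTop (nhds 0)) :
    Tendsto (fun m => sSup ((fun P => P.real (Ici m)) '' Ps)) atTop (nhds 0) := by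
  let X : ℕ → ℕ → ℝ := fun m => (Ici m).indicator 1
  have hX_nonneg : ∀ m ω, 0 ≤ X m ω := fun m ω => indicator_nonneg (fun _ _ => zero_le_one) ω
  have hX_le_one : ∀ m ω, X m ω ≤ 1 := fun m ω => indicator_le_self' (fun _ _ => zero_le_one) ω
  have hX_anti : ∀ ω, Antitone fun m => X m ω := fun ω m m' hmm' =>
    indicator_le_indicator_of_subset (Ici_subset_Ici.2 hmm') (fun _ => zero_le_one) ω
  have hX_tendsto : ∀ ω, Tendsto (fun m => X m ω) atTop (nhds 0) := fun ω =>
    tendsto_atTop_of_eventually_const (i₀ := ω + 1) fun m hm =>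
      indicator_of_notMem (by simp only [mem_Ici]; omega) _
  simpa only [X, integral_indicator_one measurableSet_Ici] using
    hreg X 1 hX_nonneg hX_le_one hX_anti hX_tendsto

theorem regular_implies_tight_general
    (Ps : Set (Measure ℕ))
    (hprob : ∀ P ∈ Ps, IsProbabilityMeasure P)
    (hreg : ∀ (X : ℕ → ℕ → ℝ) (C : ℝ),
      (∀ m ω, 0 ≤ X m ω) → (∀ m ω, X m ω ≤ C) →
      (∀ ω, Antitone fun m => X m ω) →
      (∀ ω, Tendsto (fun m => X m ω) atTop (nhds 0)) →
      Tendsto (fun m => sSup ((fun P => ∫ ω, X m ω ∂P) '' Ps)) atTop (nhds 0)) :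
    ∀ ε : ℝ, 0 < ε → ∃ K : Finset ℕ,
      (⨆ P ∈ Ps, P ((↑K : Set ℕ)ᶜ)) < ENNReal.ofReal ε := by
  intro ε hε
  obtain ⟨m, hm⟩ :=
    ((tendsto_sSup_measureReal_Ici_of_regular Ps hreg).eventually (gt_mem_nhds hε)).exists
  refine ⟨Finset.range m, ?_⟩
  have hcompl : ((↑(Finset.range m) : Set ℕ)ᶜ) = Ici m := by
    ext ω
    simp
  rw [hcompl]
  calc ⨆ P ∈ Ps, P (Ici m) ≤ ENNReal.ofReal (sSup ((fun P => P.real (Ici m)) '' Ps)) :=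
        iSup_measure_le_ofReal_sSup_measureReal hprob _
    _ < ENNReal.ofReal ε := (ENNReal.ofReal_lt_ofReal_iff hε).2 hm

/-- If the sublinear expectation `E[X] = sup_{P∈Ps} E_P[X]` on a countable
discrete space is regular (for every uniformly bounded sequence `X_m ↓ 0`
pointwise, `E[X_m] ↓ 0`), then `Ps` is uniformly tight. -/
theorem regular_implies_tight
    (Ps : Set (Measure ℕ)) (hPs : Ps.Nonempty)
    (hprob : ∀ P ∈ Ps, IsProbabilityMeasure P)
    (hreg : ∀ (X : ℕ → ℕ → ℝ) (C : ℝ),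
      (∀ m ω, 0 ≤ X m ω) → (∀ m ω, X m ω ≤ C) →
      (∀ ω, Antitone fun m => X m ω) →
      (∀ ω, Tendsto (fun m => X m ω) atTop (nhds 0)) →
      Tendsto (fun m => sSup ((fun P => ∫ ω, X m ω ∂P) '' Ps)) atTop (nhds 0)) :
    ∀ ε : ℝ, 0 < ε → ∃ K : Finset ℕ,
      (⨆ P ∈ Ps, P ((↑K : Set ℕ)ᶜ)) < ENNReal.ofReal ε :=
  regular_implies_tight_general Ps hprob hreg
end

section
/- If Ω is countable discrete and the family P of probability measures is uniformly tight (for every ε > 0 there is a finite K with sup_{P∈P} P(K^c) < ε), then the sublinear expectation E[X] = sup_{P∈P} E_P[X] is regular: for every uniformly bounded sequence of nonnegative functions X_m ↓ 0 pointwise, E[X_m] ↓ 0. -/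
open MeasureTheory Filter

/-!
On the finite set `K` given by tightness the functions `X m` eventually lie below any `δ > 0`
uniformly, while off `K` they are bounded by `C` on a set of mass less than `η` under every
`P ∈ Ps`. Hence `∫ X m ∂P ≤ δ + C η` uniformly in `P`, so `sup_P ∫ X m ∂P` is eventually
arbitrarily small.
-/

section SublinearExpectation

variable {α : Type*} [MeasurableSpace α]

noncomputable def sublinearExpectation (Ps : Set (Measure α)) (f : α → ℝ) : ℝ :=
  sSup ((fun P => ∫ x, f x ∂P) '' Ps)

theorem sublinearExpectation_nonneg (Ps : Set (Measure α)) {f : α → ℝ} (hf : 0 ≤ f) :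
    0 ≤ sublinearExpectation Ps f :=
  Real.sSup_nonneg (by rintro _ ⟨P, -, rfl⟩; exact integral_nonneg hf)

theorem integral_le_add_mul_measureReal_compl (μ : Measure α) [IsProbabilityMeasure μ]
    {f : α → ℝ} {s : Set α} {δ C : ℝ} (hs : MeasurableSet s) (hδ : 0 ≤ δ) (hf : 0 ≤ f)
    (hfs : ∀ x ∈ s, f x ≤ δ) (hfC : ∀ x, f x ≤ C) :
    ∫ x, f x ∂μ ≤ δ + C * μ.real sᶜ := by
  have hg : Integrable (fun x => δ + sᶜ.indicator (fun _ => C) x) μ :=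
    (integrable_const δ).add ((integrable_const C).indicator hs.compl)
  have hfg : ∀ x, f x ≤ δ + sᶜ.indicator (fun _ => C) x := by
    intro x
    by_cases hx : x ∈ s
    · simpa [hx] using hfs x hx
    · simpa [hx] using (hfC x).trans (le_add_of_nonneg_left hδ)
  calc ∫ x, f x ∂μ ≤ ∫ x, δ + sᶜ.indicator (fun _ => C) x ∂μ :=
        integral_mono_of_nonneg (.of_forall hf) hg (.of_forall hfg)
    _ = δ + C * μ.real sᶜ := by
        rw [integral_add (integrable_const δ) ((integrable_const C).indicator hs.compl),
          integral_indicator_const C hs.compl]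
        simp [mul_comm]

theorem sublinearExpectation_le_add_mul {Ps : Set (Measure α)}
    (hprob : ∀ P ∈ Ps, IsProbabilityMeasure P) {s : Set α} {η δ C : ℝ} {f : α → ℝ}
    (hs : MeasurableSet s) (htail : ∀ P ∈ Ps, P sᶜ ≤ ENNReal.ofReal η) (hη : 0 ≤ η)
    (hδ : 0 ≤ δ) (hC : 0 ≤ C) (hf : 0 ≤ f) (hfs : ∀ x ∈ s, f x ≤ δ) (hfC : ∀ x, f x ≤ C) :
    sublinearExpectation Ps f ≤ δ + C * η := by
  refine Real.sSup_le ?_ (by positivity)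
  rintro _ ⟨P, hP, rfl⟩
  have := hprob P hP
  calc ∫ x, f x ∂P ≤ δ + C * P.real sᶜ :=
        integral_le_add_mul_measureReal_compl P hs hδ hf hfs hfC
    _ ≤ δ + C * η := by
        gcongr
        exact ENNReal.toReal_le_of_le_ofReal hη (htail P hP)

end SublinearExpectation

theorem tight_implies_regular_general
    (Ps : Set (Measure ℕ))
    (hprob : ∀ P ∈ Ps, IsProbabilityMeasure P)
    (htight : ∀ ε : ℝ, 0 < ε → ∃ K : Finset ℕ,
      ∀ P ∈ Ps, P ((↑K : Set ℕ)ᶜ) < ENNReal.ofReal ε)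
    (X : ℕ → ℕ → ℝ) (C : ℝ)
    (hnn : ∀ m ω, 0 ≤ X m ω) (hbd : ∀ m ω, X m ω ≤ C)
    (hto0 : ∀ ω, Tendsto (fun m => X m ω) atTop (nhds 0)) :
    Tendsto (fun m => sSup ((fun P => ∫ ω, X m ω ∂P) '' Ps)) atTop (nhds 0) := by
  change Tendsto (fun m => sublinearExpectation Ps (X m)) atTop (nhds 0)
  have hC : 0 ≤ C := (hnn 0 0).trans (hbd 0 0)
  refine tendsto_order.2 ⟨fun a ha => .of_forall fun m =>
    ha.trans_le (sublinearExpectation_nonneg Ps (hnn m)), fun ε hε => ?_⟩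
  obtain ⟨η, hη, hCη⟩ := exists_pos_mul_lt (half_pos hε) C
  obtain ⟨K, hK⟩ := htight η hη
  have hsmall : ∀ᶠ m in atTop, ∀ ω ∈ K, X m ω ≤ ε / 2 :=
    (eventually_all_finset K).2 fun ω _ => ((hto0 ω).eventually_lt_const (half_pos hε)).mono
      fun _ => le_of_lt
  filter_upwards [hsmall] with m hm
  calc sublinearExpectation Ps (X m) ≤ ε / 2 + C * η :=
        sublinearExpectation_le_add_mul hprob MeasurableSet.of_discrete
          (fun P hP => (hK P hP).le) hη.le (half_pos hε).le hC (hnn m) hm (hbd m)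
    _ < ε := by linarith

/-- If `Ps` is uniformly tight on a countable discrete space, then the sublinear
expectation `E[X] = sup_{P∈Ps} E_P[X]` is regular: for every uniformly bounded,
nonnegative, pointwise decreasing-to-zero sequence `X_m`, `E[X_m] ↓ 0`. -/
theorem tight_implies_regular
    (Ps : Set (Measure ℕ)) (hPs : Ps.Nonempty)
    (hprob : ∀ P ∈ Ps, IsProbabilityMeasure P)
    (htight : ∀ ε : ℝ, 0 < ε → ∃ K : Finset ℕ,
      ∀ P ∈ Ps, P ((↑K : Set ℕ)ᶜ) < ENNReal.ofReal ε)
    (X : ℕ → ℕ → ℝ) (C : ℝ)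
    (hnn : ∀ m ω, 0 ≤ X m ω) (hbd : ∀ m ω, X m ω ≤ C)
    (hanti : ∀ ω, Antitone fun m => X m ω)
    (hto0 : ∀ ω, Tendsto (fun m => X m ω) atTop (nhds 0)) :
    Tendsto (fun m => sSup ((fun P => ∫ ω, X m ω ∂P) '' Ps)) atTop (nhds 0) :=
  tight_implies_regular_general Ps hprob htight X C hnn hbd hto0
end

section
/- Monotone convergence theorem (bounded, increasing) for sublinear expectation over a uniformly tight family: if X_m ↑ X pointwise with all X_m and X uniformly bounded on a countable discrete space, then sup_{P∈P} E_P[X_m] ↑ sup_{P∈P} E_P[X]. -/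
/-!
By uniform tightness there is a finite set `K` carrying all but `ε` of the mass of every
`P ∈ Ps`. On `K` the convergence `X_m → X` is uniform, and off `K` the gap `X - X_m` is at most
`2C`, so `E_P[X] ≤ E_P[X_m] + O(ε)` for all `m` large, uniformly in `P`; taking suprema gives
`E[X] ≤ E[X_m] + O(ε)`, while `E[X_m] ≤ E[X_{m+1}] ≤ E[X]` by monotonicity.
-/

open MeasureTheory Filter

section

variable {Ω : Type*} [MeasurableSpace Ω]

/-- The sublinear expectation `E[f] = sup_{P ∈ Ps} E_P[f]`. -/
noncomputable def upperExpectation (Ps : Set (Measure Ω)) (f : Ω → ℝ) : ℝ :=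
  sSup ((fun P => ∫ ω, f ω ∂P) '' Ps)

variable {Ps : Set (Measure Ω)}

theorem exists_finset_forall_mul_measureReal_compl_le
    (htight : ∀ ε : ℝ, 0 < ε → ∃ K : Finset Ω, ∀ P ∈ Ps, P ((↑K : Set Ω)ᶜ) < ENNReal.ofReal ε)
    (c : ℝ) {ε : ℝ} (hε : 0 < ε) :
    ∃ K : Finset Ω, ∀ P ∈ Ps, c * P.real (↑K : Set Ω)ᶜ ≤ ε := by
  obtain ⟨K, hK⟩ := htight (ε / (|c| + 1)) (by positivity)
  refine ⟨K, fun P hP => ?_⟩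
  have hPK : P.real (↑K : Set Ω)ᶜ ≤ ε / (|c| + 1) :=
    ENNReal.toReal_le_of_le_ofReal (by positivity) (hK P hP).le
  calc c * P.real (↑K : Set Ω)ᶜ ≤ |c| * (ε / (|c| + 1)) :=
        mul_le_mul (le_abs_self c) hPK measureReal_nonneg (abs_nonneg c)
    _ ≤ ε := by
        rw [mul_div_assoc', div_le_iff₀ (by positivity)]
        nlinarith [abs_nonneg c]

theorem integral_le_of_abs_le {P : Measure Ω} [IsProbabilityMeasure P] {f : Ω → ℝ} {C : ℝ}
    (hf : ∀ ω, |f ω| ≤ C) : ∫ ω, f ω ∂P ≤ C :=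
  calc ∫ ω, f ω ∂P ≤ ‖∫ ω, f ω ∂P‖ := Real.le_norm_self _
    _ ≤ C * P.real Set.univ := norm_integral_le_of_norm_le_const (ae_of_all _ hf)
    _ = C := by simp

theorem bddAbove_integral_image (hprob : ∀ P ∈ Ps, IsProbabilityMeasure P) {f : Ω → ℝ} {C : ℝ}
    (hf : ∀ ω, |f ω| ≤ C) : BddAbove ((fun P => ∫ ω, f ω ∂P) '' Ps) := by
  refine ⟨C, ?_⟩
  rintro _ ⟨P, hP, rfl⟩
  have := hprob P hP
  exact integral_le_of_abs_le hf

theorem upperExpectation_le_add (hPs : Ps.Nonempty) (hprob : ∀ P ∈ Ps, IsProbabilityMeasure P)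
    {f g : Ω → ℝ} {C δ : ℝ} (hg : ∀ ω, |g ω| ≤ C)
    (hfg : ∀ P ∈ Ps, ∫ ω, f ω ∂P ≤ ∫ ω, g ω ∂P + δ) :
    upperExpectation Ps f ≤ upperExpectation Ps g + δ := by
  refine csSup_le (hPs.image _) ?_
  rintro _ ⟨P, hP, rfl⟩
  exact (hfg P hP).trans
    (add_le_add_left (le_csSup (bddAbove_integral_image hprob hg) ⟨P, hP, rfl⟩) δ)

variable [DiscreteMeasurableSpace Ω]

theorem integrable_of_abs_le {P : Measure Ω} [IsFiniteMeasure P] {f : Ω → ℝ} {C : ℝ}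
    (hf : ∀ ω, |f ω| ≤ C) : Integrable f P :=
  .of_bound Measurable.of_discrete.aestronglyMeasurable C (ae_of_all _ hf)

theorem integral_le_integral_add_of_le_add_on {P : Measure Ω} [IsProbabilityMeasure P]
    {f g : Ω → ℝ} {C η : ℝ} {K : Set Ω} (hη : 0 ≤ η) (hf : ∀ ω, |f ω| ≤ C)
    (hg : ∀ ω, |g ω| ≤ C) (hK : ∀ ω ∈ K, g ω ≤ f ω + η) :
    ∫ ω, g ω ∂P ≤ ∫ ω, f ω ∂P + η + 2 * C * P.real Kᶜ := by
  have hKc : MeasurableSet Kᶜ := .of_discrete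
  have hfη : Integrable (fun ω => f ω + η) P := (integrable_of_abs_le hf).add (integrable_const η)
  have hind : Integrable (Kᶜ.indicator fun _ => 2 * C) P := (integrable_const _).indicator hKc
  have hpt : ∀ ω, g ω ≤ f ω + η + Kᶜ.indicator (fun _ => 2 * C) ω := by
    intro ω
    by_cases hω : ω ∈ K
    · simpa [hω] using hK ω hω
    · rw [Set.indicator_of_mem hω]
      linarith [abs_le.1 (hf ω), abs_le.1 (hg ω)]
  calc ∫ ω, g ω ∂P ≤ ∫ ω, (f ω + η + Kᶜ.indicator (fun _ => 2 * C) ω) ∂P :=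
        integral_mono (integrable_of_abs_le hg) (hfη.add hind) hpt
    _ = ∫ ω, f ω ∂P + η + 2 * C * P.real Kᶜ := by
        rw [integral_add (f := fun ω => f ω + η) hfη hind,
          integral_add (integrable_of_abs_le hf) (integrable_const η), integral_const,
          integral_indicator_const _ hKc]
        simp [mul_comm]

theorem upperExpectation_mono (hPs : Ps.Nonempty) (hprob : ∀ P ∈ Ps, IsProbabilityMeasure P)
    {f g : Ω → ℝ} {C : ℝ} (hf : ∀ ω, |f ω| ≤ C) (hg : ∀ ω, |g ω| ≤ C) (hfg : f ≤ g) :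
    upperExpectation Ps f ≤ upperExpectation Ps g := by
  simpa using upperExpectation_le_add hPs hprob (δ := 0) hg fun P hP => by
    have := hprob P hP
    simpa using integral_mono (integrable_of_abs_le hf) (integrable_of_abs_le hg) hfg

theorem eventually_forall_integral_le_integral_add {ι : Type*} {l : Filter ι}
    (hprob : ∀ P ∈ Ps, IsProbabilityMeasure P)
    (htight : ∀ ε : ℝ, 0 < ε → ∃ K : Finset Ω, ∀ P ∈ Ps, P ((↑K : Set Ω)ᶜ) < ENNReal.ofReal ε)
    {X : ι → Ω → ℝ} {Xlim : Ω → ℝ} {C : ℝ} (hbd : ∀ m ω, |X m ω| ≤ C)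
    (hbdlim : ∀ ω, |Xlim ω| ≤ C) (hconv : ∀ ω, Tendsto (fun m => X m ω) l (nhds (Xlim ω)))
    {ε : ℝ} (hε : 0 < ε) :
    ∀ᶠ m in l, ∀ P ∈ Ps, ∫ ω, Xlim ω ∂P ≤ ∫ ω, X m ω ∂P + ε := by
  obtain ⟨K, hK⟩ := exists_finset_forall_mul_measureReal_compl_le htight (2 * C) (half_pos hε)
  have hunif : ∀ᶠ m in l, ∀ ω ∈ K, Xlim ω - ε / 2 < X m ω :=
    (eventually_all_finset K).2 fun ω _ =>
      (hconv ω).eventually_const_lt (sub_lt_self _ (half_pos hε))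
  filter_upwards [hunif] with m hm P hP
  have := hprob P hP
  have := integral_le_integral_add_of_le_add_on (P := P) (half_pos hε).le (hbd m) hbdlim
    fun ω hω => (sub_lt_iff_lt_add.1 (hm ω hω)).le
  linarith [hK P hP]

end

/-- Monotone convergence theorem (bounded, increasing) for the sublinear
expectation over a uniformly tight family: if `X_m ↑ X` pointwise with all
functions uniformly bounded, then `E[X_m] ↑ E[X]`. -/
theorem monotone_convergence_increasing
    (Ps : Set (Measure ℕ)) (hPs : Ps.Nonempty)
    (hprob : ∀ P ∈ Ps, IsProbabilityMeasure P)
    (htight : ∀ ε : ℝ, 0 < ε → ∃ K : Finset ℕ,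
      ∀ P ∈ Ps, P ((↑K : Set ℕ)ᶜ) < ENNReal.ofReal ε)
    (X : ℕ → ℕ → ℝ) (Xlim : ℕ → ℝ) (C : ℝ)
    (hbd : ∀ m ω, |X m ω| ≤ C) (hbdlim : ∀ ω, |Xlim ω| ≤ C)
    (hmono : ∀ ω, Monotone fun m => X m ω)
    (hconv : ∀ ω, Tendsto (fun m => X m ω) atTop (nhds (Xlim ω))) :
    (Monotone fun m => sSup ((fun P => ∫ ω, X m ω ∂P) '' Ps)) ∧
      Tendsto (fun m => sSup ((fun P => ∫ ω, X m ω ∂P) '' Ps)) atTop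
        (nhds (sSup ((fun P => ∫ ω, Xlim ω ∂P) '' Ps))) := by
  change (Monotone fun m => upperExpectation Ps (X m)) ∧
    Tendsto (fun m => upperExpectation Ps (X m)) atTop (nhds (upperExpectation Ps Xlim))
  have hle : ∀ m, X m ≤ Xlim := fun m ω => (hmono ω).ge_of_tendsto (hconv ω) m
  refine ⟨fun m n hmn => upperExpectation_mono hPs hprob (hbd m) (hbd n) fun ω => hmono ω hmn,
    tendsto_order.2 ⟨fun a ha => ?_, fun b hb => .of_forall fun m => ?_⟩⟩
  · filter_upwards [eventually_forall_integral_le_integral_add hprob htight hbd hbdlim hconv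
      (half_pos (sub_pos.2 ha))] with m hm
    linarith [upperExpectation_le_add hPs hprob (hbd m) hm]
  · exact (upperExpectation_mono hPs hprob (hbd m) hbdlim (hle m)).trans_lt hb
end
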